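/- Let Z be a finite set with |Z| = D ≥ 1, let γ > 1 with A the γ-diagonal matrix on Z, and let 1 ≤ m ≤ n. Fix z ∈ Z^n. Let (I_1,…,I_m) be a uniformly random injective m-tuple with entries in {1,…,n}, let z̃ = (z_{I_1},…,z_{I_m}), and given z̃ let Ŵ = (Ŵ_1,…,Ŵ_m) have independent components with P(Ŵ_i = w) = A[w, z̃_i]. Then the expected ℓ2-norm error of the type estimate satisfies E‖A⁻¹·T_{Ŵ} − T_z‖₂ ≤ (c·√D + 1)/√m, where c = 1 + D/(γ − 1) is the ℓ2 condition number of A. -/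

import Mathlib

/-!
Write `q = γ + D - 1` and `c = q / (γ - 1)`. On vectors of zero sum `A` acts as the scalar
`1 / c`, so for the sampled sequence `ẑ = z ∘ π`
`A⁻¹ T_Ŵ - T_z = c • (T_Ŵ - A T_ẑ) + (T_ẑ - T_z)`.
By Cauchy–Schwarz the expected norm of each term is at most the square root of its second
moment. Given `ẑ`, `T_Ŵ - A T_ẑ` is the mean of `m` independent centred indicator vectors, so
its second moment is at most `1 / m`. `T_ẑ - T_z` is the mean of `m` draws without replacement
from the centred indicator vectors of `z`; distinct draws are negatively correlated, so its second
moment is at most `1 / m` as well. Hence the error is at most `(c + 1) / √m ≤ (c √D + 1) / √m`.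
-/

open Finset Matrix

/-- The γ-diagonal PRAM matrix on a finite alphabet `Z`. -/
noncomputable def gammaDiag {Z : Type*} [Fintype Z] [DecidableEq Z] (γ : ℝ) (w z : Z) : ℝ :=
  if w = z then γ / (γ + (Fintype.card Z : ℝ) - 1) else 1 / (γ + (Fintype.card Z : ℝ) - 1)

/-- The type (empirical distribution) of a sequence `z ∈ Z^n`. -/
noncomputable def typeOf {Z : Type*} [DecidableEq Z] {n : ℕ} (z : Fin n → Z) : Z → ℝ :=
  fun a => ((Finset.univ.filter fun i => z i = a).card : ℝ) / n

/-- The set of injective `m`-tuples with entries in `{1,…,n}`. -/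
def Theta (m n : ℕ) : Finset (Fin m → Fin n) :=
  Finset.univ.filter Function.Injective

section Norms

theorem sum_mul_sqrt_le_sqrt_mul_sqrt {ι : Type*} (s : Finset ι) {P f : ι → ℝ}
    (hP : ∀ i, 0 ≤ P i) (hf : ∀ i, 0 ≤ f i) :
    ∑ i ∈ s, P i * √(f i) ≤ √(∑ i ∈ s, P i) * √(∑ i ∈ s, P i * f i) := by
  calc ∑ i ∈ s, P i * √(f i) = ∑ i ∈ s, √(P i) * √(P i * f i) := by
        refine sum_congr rfl fun i _ => ?_
        rw [Real.sqrt_mul (hP i), ← mul_assoc, Real.mul_self_sqrt (hP i)]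
    _ ≤ √(∑ i ∈ s, P i) * √(∑ i ∈ s, P i * f i) :=
        Real.sum_sqrt_mul_sqrt_le s hP fun i => mul_nonneg (hP i) (hf i)

variable {Z : Type*} [Fintype Z]

theorem sqrt_sum_sq_add_le (u v : Z → ℝ) :
    √(∑ w, (u w + v w) ^ 2) ≤ √(∑ w, u w ^ 2) + √(∑ w, v w ^ 2) := by
  simpa [EuclideanSpace.norm_eq] using
    norm_add_le (WithLp.toLp 2 u : EuclideanSpace ℝ Z) (WithLp.toLp 2 v)

theorem sqrt_sum_mul_sq {c : ℝ} (hc : 0 ≤ c) (u : Z → ℝ) :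
    √(∑ w, (c * u w) ^ 2) = c * √(∑ w, u w ^ 2) := by
  simp_rw [mul_pow, ← mul_sum]
  rw [Real.sqrt_mul (sq_nonneg c), Real.sqrt_sq hc]

end Norms

section ProductWeights

variable {ι Z : Type*} [Fintype ι] [DecidableEq ι] [Fintype Z]

theorem sum_prod_mul_prod_eq_prod_sum (p f : ι → Z → ℝ) :
    ∑ w : ι → Z, (∏ j, p j (w j)) * ∏ j, f j (w j) = ∏ j, ∑ x, p j x * f j x := by
  rw [Fintype.prod_sum]
  simp_rw [← prod_mul_distrib]

variable {p : ι → Z → ℝ}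

theorem sum_prod_eq_one (hp : ∀ j, ∑ x, p j x = 1) : ∑ w : ι → Z, ∏ j, p j (w j) = 1 := by
  rw [← Fintype.prod_sum]
  simp [hp]

theorem sum_prod_mul_apply_mul_apply (hp : ∀ j, ∑ x, p j x = 1) {i k : ι} (hik : i ≠ k)
    (f g : Z → ℝ) :
    ∑ w : ι → Z, (∏ j, p j (w j)) * (f (w i) * g (w k))
      = (∑ x, p i x * f x) * ∑ x, p k x * g x := by
  have h := sum_prod_mul_prod_eq_prod_sum p
    fun j x => (if j = i then f x else 1) * (if j = k then g x else 1)
  have hfactor : ∀ j, ∑ x, p j x * ((if j = i then f x else 1) * (if j = k then g x else 1))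
      = (if j = i then ∑ x, p i x * f x else 1) * (if j = k then ∑ x, p k x * g x else 1) := by
    intro j
    by_cases hji : j = i
    · subst hji; simp [hik]
    · by_cases hjk : j = k
      · subst hjk; simp [hji]
      · simp [hji, hjk, hp]
  simp only [prod_mul_distrib, Fintype.prod_ite_eq', hfactor] at h
  exact h

theorem sum_prod_mul_apply (hp : ∀ j, ∑ x, p j x = 1) (i : ι) (f : Z → ℝ) :
    ∑ w : ι → Z, (∏ j, p j (w j)) * f (w i) = ∑ x, p i x * f x := by
  have h := sum_prod_mul_prod_eq_prod_sum p fun j x => if j = i then f x else 1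
  simpa [mul_ite, Finset.prod_ite_eq', hp] using h

theorem sum_prod_mul_sq_sum_eq_of_mean_zero (hp : ∀ j, ∑ x, p j x = 1) (Y : ι → Z → ℝ)
    (hY : ∀ i, ∑ x, p i x * Y i x = 0) :
    ∑ w : ι → Z, (∏ j, p j (w j)) * (∑ i, Y i (w i)) ^ 2 = ∑ i, ∑ x, p i x * Y i x ^ 2 := by
  calc ∑ w : ι → Z, (∏ j, p j (w j)) * (∑ i, Y i (w i)) ^ 2
      = ∑ i, ∑ k, ∑ w : ι → Z, (∏ j, p j (w j)) * (Y i (w i) * Y k (w k)) := by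
        simp_rw [sq, sum_mul_sum, mul_sum]
        rw [sum_comm]
        exact sum_congr rfl fun _ _ => sum_comm
    _ = ∑ i, ∑ x, p i x * Y i x ^ 2 := by
        refine sum_congr rfl fun i _ => ?_
        rw [sum_eq_single i (fun k _ hki => by
          rw [sum_prod_mul_apply_mul_apply hp (Ne.symm hki), hY, zero_mul]) (by simp)]
        simp_rw [sum_prod_mul_apply hp i fun x => Y i x * Y i x, sq]

end ProductWeights

theorem sum_mul_sum_sq_ite_sub_le {Z : Type*} [Fintype Z] [DecidableEq Z] {p : Z → ℝ}
    (hp : ∑ x, p x = 1) :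
    ∑ x, p x * ∑ a, ((if x = a then 1 else 0) - p a) ^ 2 ≤ 1 := by
  have hrow : ∀ x, ∑ a, ((if x = a then 1 else 0) - p a) ^ 2 = 1 - 2 * p x + ∑ a, p a ^ 2 := by
    intro x
    simp [sub_sq, sum_add_distrib, sum_sub_distrib, ite_pow]
  have hS : 0 ≤ ∑ a, p a ^ 2 := sum_nonneg fun a _ => sq_nonneg _
  calc ∑ x, p x * ∑ a, ((if x = a then 1 else 0) - p a) ^ 2
      = ∑ x, p x - 2 * ∑ x, p x ^ 2 + (∑ x, p x) * ∑ a, p a ^ 2 := by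
        rw [mul_sum, sum_mul, ← sum_sub_distrib, ← sum_add_distrib]
        exact sum_congr rfl fun x _ => by rw [hrow]; ring
    _ ≤ 1 := by rw [hp]; linarith

section TypeOf

variable {Z : Type*} [DecidableEq Z] {m : ℕ}

theorem typeOf_sub_sum_div_eq (w : Fin m → Z) (p : Fin m → Z → ℝ) (a : Z) :
    typeOf w a - (∑ i, p i a) / m = (∑ i, ((if w i = a then 1 else 0) - p i a)) / m := by
  simp [typeOf, sum_sub_distrib, sub_div]

variable [Fintype Z]

theorem sum_typeOf_mul (w : Fin m → Z) (h : Z → ℝ) :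
    ∑ x, typeOf w x * h x = (∑ i, h (w i)) / m := by
  simp only [typeOf, div_mul_eq_mul_div, ← sum_div]
  rw [← sum_fiberwise univ w fun i => h (w i)]
  congr 1
  refine sum_congr rfl fun x _ => ?_
  rw [sum_congr rfl fun i hi => by rw [(mem_filter.1 hi).2], sum_const, nsmul_eq_mul]

theorem sum_typeOf (hm : m ≠ 0) (w : Fin m → Z) : ∑ a, typeOf w a = 1 := by
  simpa [hm] using sum_typeOf_mul w 1

theorem mulVec_typeOf (M : Matrix Z Z ℝ) (w : Fin m → Z) :
    M *ᵥ typeOf w = fun a => (∑ i, M a (w i)) / m := by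
  ext a
  simp only [mulVec, dotProduct, mul_comm (M a _), sum_typeOf_mul]

theorem sum_prod_mul_sum_sq_typeOf_sub_le {p : Fin m → Z → ℝ} (hp : ∀ i, ∑ x, p i x = 1) :
    ∑ w : Fin m → Z, (∏ j, p j (w j)) * ∑ a, (typeOf w a - (∑ i, p i a) / m) ^ 2 ≤ 1 / m := by
  have hvar : ∀ a, ∑ w : Fin m → Z, (∏ j, p j (w j)) * (typeOf w a - (∑ i, p i a) / m) ^ 2
      = (∑ i, ∑ x, p i x * ((if x = a then 1 else 0) - p i a) ^ 2) / m ^ 2 := by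
    intro a
    simp_rw [typeOf_sub_sum_div_eq, div_pow, mul_div_assoc', ← sum_div]
    congr 1
    refine sum_prod_mul_sq_sum_eq_of_mean_zero hp (fun i x => (if x = a then 1 else 0) - p i a) ?_
    intro i
    simp [mul_sub, ← sum_mul, hp]
  calc ∑ w : Fin m → Z, (∏ j, p j (w j)) * ∑ a, (typeOf w a - (∑ i, p i a) / m) ^ 2
      = (∑ i, ∑ x, p i x * ∑ a, ((if x = a then 1 else 0) - p i a) ^ 2) / m ^ 2 := by
        simp_rw [mul_sum]
        rw [sum_comm, sum_congr rfl fun a _ => hvar a, ← sum_div, sum_comm]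
        congr 1
        exact sum_congr rfl fun i _ => sum_comm
    _ ≤ (∑ _i : Fin m, (1 : ℝ)) / m ^ 2 := by
        gcongr with i
        exact sum_mul_sum_sq_ite_sub_le (hp i)
    _ = 1 / m := by
        rcases eq_or_ne m 0 with rfl | hm
        · simp
        · field_simp
          simp

end TypeOf

section GammaDiag

variable {Z : Type*} [Fintype Z] {γ : ℝ} {m : ℕ}

theorem gammaDiag_denom_pos (hγ : 1 < γ) : 0 < γ + (Fintype.card Z : ℝ) - 1 := by
  linarith [(Nat.cast_nonneg _ : (0 : ℝ) ≤ Fintype.card Z)]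

variable [DecidableEq Z]

theorem gammaDiag_nonneg (hγ : 1 < γ) (w x : Z) : 0 ≤ gammaDiag γ w x := by
  have := gammaDiag_denom_pos (Z := Z) hγ
  unfold gammaDiag
  split_ifs <;> positivity

theorem gammaDiag_mulVec (γ : ℝ) (v : Z → ℝ) :
    of (gammaDiag γ) *ᵥ v = fun w => ((γ - 1) * v w + ∑ x, v x) / (γ + Fintype.card Z - 1) := by
  ext w
  have hsplit : ∀ x, gammaDiag γ w x * v x
      = ((if w = x then (γ - 1) * v x else 0) + v x) / (γ + Fintype.card Z - 1) := by
    intro x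
    unfold gammaDiag
    split_ifs <;> ring
  simp only [mulVec, dotProduct, of_apply, hsplit, ← sum_div, sum_add_distrib, sum_ite_eq,
    mem_univ, if_true]

theorem gammaDiag_comm (γ : ℝ) (w x : Z) : gammaDiag γ w x = gammaDiag γ x w := by
  simp only [gammaDiag, eq_comm]

theorem sum_gammaDiag (hγ : 1 < γ) (x : Z) : ∑ w, gammaDiag γ w x = 1 := by
  have hq := (gammaDiag_denom_pos (Z := Z) hγ).ne'
  have h := congrFun (gammaDiag_mulVec γ fun _ => 1) x
  simp only [mulVec, dotProduct, of_apply, mul_one, sum_const, card_univ, nsmul_eq_mul] at h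
  rw [sum_congr rfl fun w _ => gammaDiag_comm γ w x, h]
  field_simp
  ring

theorem gammaDiag_mulVec_rightInv (hγ : 1 < γ) (x : Z → ℝ) :
    of (gammaDiag γ) *ᵥ (fun w => ((γ + Fintype.card Z - 1) * x w - ∑ y, x y) / (γ - 1)) = x := by
  have hq := (gammaDiag_denom_pos (Z := Z) hγ).ne'
  have hγ1 : γ - 1 ≠ 0 := by linarith
  rw [gammaDiag_mulVec]
  ext w
  simp only [← sum_div, sum_sub_distrib, ← mul_sum, sum_const, card_univ, nsmul_eq_mul]
  field_simp
  ring

theorem gammaDiag_inv_mulVec (hγ : 1 < γ) (x : Z → ℝ) :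
    (of (gammaDiag γ))⁻¹ *ᵥ x = fun w => ((γ + Fintype.card Z - 1) * x w - ∑ y, x y) / (γ - 1) := by
  have hA : IsUnit (of (gammaDiag γ) : Matrix Z Z ℝ).det := by
    rw [← isUnit_iff_isUnit_det, ← mulVec_surjective_iff_isUnit]
    exact fun x => ⟨_, gammaDiag_mulVec_rightInv hγ x⟩
  conv_lhs => rw [← gammaDiag_mulVec_rightInv hγ x]
  rw [mulVec_mulVec, nonsing_inv_mul _ hA, one_mulVec]

theorem gammaDiag_inv_mulVec_eq_add_smul (hγ : 1 < γ) {x y : Z → ℝ}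
    (hxy : ∑ w, x w = ∑ w, y w) :
    (of (gammaDiag γ))⁻¹ *ᵥ x
      = y + (1 + Fintype.card Z / (γ - 1)) • (x - of (gammaDiag γ) *ᵥ y) := by
  have hq := (gammaDiag_denom_pos (Z := Z) hγ).ne'
  have hγ1 : γ - 1 ≠ 0 := by linarith
  rw [gammaDiag_inv_mulVec hγ, gammaDiag_mulVec, hxy]
  ext w
  simp only [Pi.add_apply, Pi.smul_apply, Pi.sub_apply, smul_eq_mul]
  field_simp
  ring

theorem sqrt_sum_sq_gammaDiag_inv_mulVec_sub_le (hγ : 1 < γ) {x y : Z → ℝ}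
    (hxy : ∑ w, x w = ∑ w, y w) (t : Z → ℝ) :
    √(∑ w, (((of (gammaDiag γ))⁻¹ *ᵥ x) w - t w) ^ 2)
      ≤ (1 + Fintype.card Z / (γ - 1)) * √(∑ w, (x w - (of (gammaDiag γ) *ᵥ y) w) ^ 2)
        + √(∑ w, (y w - t w) ^ 2) := by
  have hc : 0 ≤ 1 + (Fintype.card Z : ℝ) / (γ - 1) := by
    have : 0 < γ - 1 := by linarith
    positivity
  rw [gammaDiag_inv_mulVec_eq_add_smul hγ hxy, ← sqrt_sum_mul_sq hc]
  refine le_of_eq_of_le ?_ (sqrt_sum_sq_add_le _ _)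
  congr 1
  refine sum_congr rfl fun w _ => ?_
  simp only [Pi.add_apply, Pi.smul_apply, Pi.sub_apply, smul_eq_mul]
  ring

theorem sum_prod_gammaDiag_mul_sqrt_le (hγ : 1 < γ) (hm : m ≠ 0) (y : Fin m → Z)
    (t : Z → ℝ) :
    ∑ w : Fin m → Z, (∏ i, gammaDiag γ (w i) (y i))
        * √(∑ a, (((of (gammaDiag γ))⁻¹ *ᵥ typeOf w) a - t a) ^ 2)
      ≤ (1 + Fintype.card Z / (γ - 1)) / √m + √(∑ a, (typeOf y a - t a) ^ 2) := by
  set c : ℝ := 1 + Fintype.card Z / (γ - 1)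
  have hc : 0 ≤ c := by
    have : 0 < γ - 1 := by linarith
    positivity
  set p : Fin m → Z → ℝ := fun i x => gammaDiag γ x (y i)
  have hp : ∀ i, ∑ x, p i x = 1 := fun i => sum_gammaDiag hγ (y i)
  have hP0 : ∀ w : Fin m → Z, 0 ≤ ∏ i, p i (w i) :=
    fun w => prod_nonneg fun i _ => gammaDiag_nonneg hγ _ _
  have hP1 : ∑ w : Fin m → Z, ∏ i, p i (w i) = 1 := sum_prod_eq_one hp
  have hmean : of (gammaDiag γ) *ᵥ typeOf y = fun a => (∑ i, p i a) / m := mulVec_typeOf _ _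
  calc ∑ w : Fin m → Z, (∏ i, p i (w i))
        * √(∑ a, (((of (gammaDiag γ))⁻¹ *ᵥ typeOf w) a - t a) ^ 2)
      ≤ ∑ w : Fin m → Z, (∏ i, p i (w i))
        * (c * √(∑ a, (typeOf w a - (∑ i, p i a) / m) ^ 2) + √(∑ a, (typeOf y a - t a) ^ 2)) := by
        gcongr with w
        · exact hP0 w
        · have h := sqrt_sum_sq_gammaDiag_inv_mulVec_sub_le hγ
            (by rw [sum_typeOf hm, sum_typeOf hm] : ∑ a, typeOf w a = ∑ a, typeOf y a) t
          rwa [hmean] at h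
    _ = c * ∑ w : Fin m → Z, (∏ i, p i (w i)) * √(∑ a, (typeOf w a - (∑ i, p i a) / m) ^ 2)
        + √(∑ a, (typeOf y a - t a) ^ 2) := by
        simp_rw [mul_add, sum_add_distrib, ← sum_mul, hP1, one_mul, mul_sum]
        congr 1
        exact sum_congr rfl fun w _ => by ring
    _ ≤ c * (√1 * √(1 / m)) + √(∑ a, (typeOf y a - t a) ^ 2) := by
        gcongr
        refine (sum_mul_sqrt_le_sqrt_mul_sqrt _ hP0
          fun w => sum_nonneg fun a _ => sq_nonneg _).trans ?_
        rw [hP1]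
        gcongr
        exact sum_prod_mul_sum_sq_typeOf_sub_le hp
    _ = c / √m + √(∑ a, (typeOf y a - t a) ^ 2) := by
        rw [Real.sqrt_one, one_mul, one_div, Real.sqrt_inv, div_eq_mul_inv]

end GammaDiag

theorem sum_comp_eq_card_div_mul_sum {α β : Type*} [DecidableEq β] {s : Finset α}
    {t : Finset β} {f : α → β} (hf : ∀ x ∈ s, f x ∈ t)
    (hfib : ∀ y ∈ t, ∀ y' ∈ t, #{x ∈ s | f x = y} = #{x ∈ s | f x = y'}) (g : β → ℝ) :
    ∑ x ∈ s, g (f x) = #s / #t * ∑ y ∈ t, g y := by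
  obtain rfl | ⟨y₀, hy₀⟩ := t.eq_empty_or_nonempty
  · simp [eq_empty_of_forall_notMem fun x hx => notMem_empty _ (hf x hx)]
  set C := #{x ∈ s | f x = y₀}
  have hs : (#s : ℝ) = #t * C := by
    rw [card_eq_sum_card_fiberwise hf, sum_const_nat fun y hy => hfib y hy y₀ hy₀]
    push_cast; ring
  have ht : (#t : ℝ) ≠ 0 := by exact_mod_cast (card_pos.2 ⟨y₀, hy₀⟩).ne'
  rw [← sum_fiberwise_of_maps_to hf, hs, mul_div_cancel_left₀ _ ht, mul_sum]
  refine sum_congr rfl fun y hy => ?_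
  rw [sum_congr rfl fun x hx => by rw [(mem_filter.1 hx).2], sum_const, nsmul_eq_mul,
    hfib y hy y₀ hy₀]

theorem sum_offDiag_mul {α : Type*} [DecidableEq α] (s : Finset α) (g : α → ℝ) :
    ∑ q ∈ s.offDiag, g q.1 * g q.2 = (∑ j ∈ s, g j) ^ 2 - ∑ j ∈ s, g j ^ 2 := by
  rw [sq, sum_mul_sum, ← sum_product', ← diag_union_offDiag, sum_union (disjoint_diag_offDiag s)]
  simp [sq]

section Theta

variable {m n : ℕ}

theorem mem_Theta {π : Fin m → Fin n} : π ∈ Theta m n ↔ Function.Injective π := by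
  simp [Theta]

theorem card_filter_Theta_perm_comp (σ : Equiv.Perm (Fin n)) (P : (Fin m → Fin n) → Prop)
    [DecidablePred P] : #{π ∈ Theta m n | P (σ ∘ π)} = #{π ∈ Theta m n | P π} := by
  refine card_nbij' (σ ∘ ·) (σ.symm ∘ ·) ?_ ?_ ?_ ?_
  · intro π hπ
    simp only [mem_coe, mem_filter, mem_Theta] at hπ ⊢
    exact ⟨σ.injective.comp hπ.1, hπ.2⟩
  · intro π hπ
    simp only [mem_coe, mem_filter, mem_Theta] at hπ ⊢
    refine ⟨σ.symm.injective.comp hπ.1, ?_⟩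
    simpa [← Function.comp_assoc] using hπ.2
  · intro π _; ext; simp
  · intro π _; ext; simp

theorem sum_Theta_apply (i : Fin m) (g : Fin n → ℝ) :
    ∑ π ∈ Theta m n, g (π i) = #(Theta m n) / n * ∑ j, g j := by
  rw [sum_comp_eq_card_div_mul_sum (t := univ) (fun _ _ => mem_univ _), card_univ,
    Fintype.card_fin]
  intro j _ j' _
  rw [← card_filter_Theta_perm_comp (Equiv.swap j j') fun π => π i = j']
  congr 1
  refine filter_congr fun π _ => ?_
  simp [Equiv.swap_apply_eq_iff]

theorem sum_Theta_apply_mul_apply {i k : Fin m} (hik : i ≠ k) (g : Fin n → ℝ) :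
    ∑ π ∈ Theta m n, g (π i) * g (π k)
      = #(Theta m n) / #(univ : Finset (Fin n)).offDiag
          * ∑ q ∈ (univ : Finset (Fin n)).offDiag, g q.1 * g q.2 := by
  refine sum_comp_eq_card_div_mul_sum (f := fun π : Fin m → Fin n => (π i, π k))
    (g := fun q => g q.1 * g q.2) ?_ ?_
  · intro π hπ
    simp only [mem_offDiag, mem_univ, true_and]
    exact (mem_Theta.1 hπ).ne hik
  · rintro ⟨j, l⟩ hjl ⟨j', l'⟩ hjl'
    simp only [mem_offDiag, mem_univ, true_and] at hjl hjl'
    obtain ⟨σ, hσ⟩ := Equiv.Perm.exists_extending_pair ![j, l] ![j', l']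
      (injective_pair_iff_ne.2 hjl) (injective_pair_iff_ne.2 hjl')
    have hj : σ j = j' := hσ 0
    have hl : σ l = l' := hσ 1
    rw [← card_filter_Theta_perm_comp σ fun π => (π i, π k) = (j', l')]
    congr 1
    refine filter_congr fun π _ => ?_
    simp [Prod.ext_iff, ← hj, ← hl]

theorem sum_Theta_sq_sum_le {g : Fin n → ℝ} (hg : ∑ j, g j = 0) :
    ∑ π ∈ Theta m n, (∑ i, g (π i)) ^ 2 ≤ #(Theta m n) * m / n * ∑ j, g j ^ 2 := by
  have hcross : ∀ i k : Fin m, ∑ π ∈ Theta m n, g (π i) * g (π k)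
      ≤ if k = i then #(Theta m n) / n * ∑ j, g j ^ 2 else 0 := by
    intro i k
    split_ifs with hki
    · simp_rw [hki, ← sq, sum_Theta_apply i fun j => g j ^ 2, le_refl]
    · rw [sum_Theta_apply_mul_apply (Ne.symm hki), sum_offDiag_mul, hg]
      have : 0 ≤ ∑ j, g j ^ 2 := sum_nonneg fun j _ => sq_nonneg _
      apply mul_nonpos_of_nonneg_of_nonpos (by positivity)
      linarith
  calc ∑ π ∈ Theta m n, (∑ i, g (π i)) ^ 2
      = ∑ i, ∑ k, ∑ π ∈ Theta m n, g (π i) * g (π k) := by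
        simp_rw [sq, sum_mul_sum]
        rw [sum_comm]
        exact sum_congr rfl fun _ _ => sum_comm
    _ ≤ ∑ i : Fin m, ∑ k : Fin m, if k = i then #(Theta m n) / n * ∑ j, g j ^ 2 else 0 := by
        gcongr with i _ k
        exact hcross i k
    _ = #(Theta m n) * m / n * ∑ j, g j ^ 2 := by
        simp only [sum_ite_eq', mem_univ, if_true, sum_const, card_univ, Fintype.card_fin,
          nsmul_eq_mul]
        ring

theorem Theta_nonempty (hmn : m ≤ n) : (Theta m n).Nonempty :=
  ⟨Fin.castLE hmn, mem_Theta.2 (Fin.castLE_injective hmn)⟩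

end Theta

section Sampling

variable {Z : Type*} [DecidableEq Z] {m n : ℕ}

theorem typeOf_comp_sub_typeOf (hm : m ≠ 0) (z : Fin n → Z) (π : Fin m → Fin n) (a : Z) :
    typeOf (z ∘ π) a - typeOf z a
      = (∑ i, ((if z (π i) = a then 1 else 0) - typeOf z a)) / m := by
  have h := typeOf_sub_sum_div_eq (z ∘ π) (fun _ => typeOf z) a
  simp only [sum_const, card_univ, Fintype.card_fin, nsmul_eq_mul] at h
  rwa [mul_div_cancel_left₀ _ (Nat.cast_ne_zero.2 hm)] at h

variable [Fintype Z]

theorem sum_ite_sub_typeOf (hn : n ≠ 0) (z : Fin n → Z) (a : Z) :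
    ∑ j, ((if z j = a then 1 else 0) - typeOf z a) = 0 := by
  have h := sum_typeOf_mul z fun x => if x = a then 1 else 0
  simp only [mul_ite, mul_one, mul_zero, sum_ite_eq', mem_univ, if_true] at h
  simp only [sum_sub_distrib, sum_const, card_univ, Fintype.card_fin, nsmul_eq_mul, h]
  field_simp
  ring

theorem sum_Theta_sum_sq_typeOf_comp_sub_le (hm : m ≠ 0) (hmn : m ≤ n) (z : Fin n → Z) :
    ∑ π ∈ Theta m n, ∑ a, (typeOf (z ∘ π) a - typeOf z a) ^ 2 ≤ #(Theta m n) / m := by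
  have hn : n ≠ 0 := by omega
  set g : Z → Fin n → ℝ := fun a j => (if z j = a then 1 else 0) - typeOf z a
  have hg2 : ∑ a, ∑ j, g a j ^ 2 ≤ n := by
    have h := sum_mul_sum_sq_ite_sub_le (sum_typeOf hn z)
    rw [sum_typeOf_mul z fun x => ∑ a, ((if x = a then 1 else 0) - typeOf z a) ^ 2,
      div_le_one (by positivity)] at h
    rw [sum_comm]
    exact h
  calc ∑ π ∈ Theta m n, ∑ a, (typeOf (z ∘ π) a - typeOf z a) ^ 2
      = ∑ a, (∑ π ∈ Theta m n, (∑ i, g a (π i)) ^ 2) / m ^ 2 := by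
        rw [sum_comm]
        simp_rw [typeOf_comp_sub_typeOf hm, div_pow, ← sum_div]
        rfl
    _ ≤ ∑ a, (#(Theta m n) * m / n * ∑ j, g a j ^ 2) / m ^ 2 := by
        gcongr with a
        exact sum_Theta_sq_sum_le (sum_ite_sub_typeOf hn z a)
    _ = #(Theta m n) / (m * n) * ∑ a, ∑ j, g a j ^ 2 := by
        rw [mul_sum]
        refine sum_congr rfl fun a _ => ?_
        field_simp
    _ ≤ #(Theta m n) / (m * n) * n := by gcongr
    _ = #(Theta m n) / m := by field_simp

theorem sum_Theta_sqrt_sum_sq_typeOf_comp_sub_le (hm : m ≠ 0) (hmn : m ≤ n) (z : Fin n → Z) :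
    ∑ π ∈ Theta m n, √(∑ a, (typeOf (z ∘ π) a - typeOf z a) ^ 2) ≤ #(Theta m n) / √m := by
  have h := sum_mul_sqrt_le_sqrt_mul_sqrt (Theta m n) (fun _ => zero_le_one)
    (f := fun π => ∑ a, (typeOf (z ∘ π) a - typeOf z a) ^ 2)
    fun π => sum_nonneg fun a _ => sq_nonneg _
  simp only [one_mul, sum_const, nsmul_eq_mul, mul_one] at h
  refine h.trans ?_
  calc √(#(Theta m n) : ℝ) * √(∑ π ∈ Theta m n, ∑ a, (typeOf (z ∘ π) a - typeOf z a) ^ 2)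
      ≤ √(#(Theta m n) : ℝ) * √(#(Theta m n) / m) := by
        gcongr
        exact sum_Theta_sum_sq_typeOf_comp_sub_le hm hmn z
    _ = #(Theta m n) / √m := by
        rw [Real.sqrt_div' _ (Nat.cast_nonneg _), ← mul_div_assoc,
          Real.mul_self_sqrt (Nat.cast_nonneg _)]

end Sampling

/-- Utility of the sampling-then-PRAM mechanism: sampling `m` of `n` entries
uniformly without replacement, perturbing each sampled symbol independently by
the γ-diagonal matrix `A`, and estimating the type by `A⁻¹·T_Ŵ` gives expected
ℓ2 error at most `(c·√D + 1)/√m`, with `c = 1 + D/(γ-1)` the ℓ2 condition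
number of `A`. -/
theorem sampling_pram_utility_bound
    {Z : Type*} [Fintype Z] [DecidableEq Z] (hD : 1 ≤ Fintype.card Z)
    (γ : ℝ) (hγ : 1 < γ) (m n : ℕ) (hm : 1 ≤ m) (hmn : m ≤ n) (z : Fin n → Z) :
    letI D : ℝ := (Fintype.card Z : ℝ)
    letI A : Matrix Z Z ℝ := Matrix.of (gammaDiag γ)
    letI c : ℝ := 1 + D / (γ - 1)
    (1 / ((Theta m n).card : ℝ)) * ∑ π ∈ Theta m n, ∑ what : Fin m → Z,
        (∏ i, gammaDiag γ (what i) (z (π i))) *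
          Real.sqrt (∑ w : Z, (A⁻¹.mulVec (typeOf what) w - typeOf z w) ^ 2)
      ≤ (c * Real.sqrt D + 1) / Real.sqrt m := by
  set c : ℝ := 1 + Fintype.card Z / (γ - 1)
  set N : ℝ := (#(Theta m n) : ℝ)
  have hm0 : m ≠ 0 := by omega
  have hN : N ≠ 0 := by simpa [N] using (Theta_nonempty hmn).ne_empty
  have hc : 0 ≤ c := by
    have : 0 < γ - 1 := by linarith
    positivity
  calc 1 / N * ∑ π ∈ Theta m n, ∑ what : Fin m → Z, (∏ i, gammaDiag γ (what i) (z (π i)))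
        * √(∑ w, (((of (gammaDiag γ))⁻¹ *ᵥ typeOf what) w - typeOf z w) ^ 2)
      ≤ 1 / N * ∑ π ∈ Theta m n, (c / √m + √(∑ a, (typeOf (z ∘ π) a - typeOf z a) ^ 2)) := by
        gcongr with π
        exact sum_prod_gammaDiag_mul_sqrt_le hγ hm0 (z ∘ π) (typeOf z)
    _ ≤ 1 / N * (N * (c / √m) + N / √m) := by
        rw [sum_add_distrib, sum_const, nsmul_eq_mul]
        gcongr
        exact sum_Theta_sqrt_sum_sq_typeOf_comp_sub_le hm0 hmn z
    _ = (c + 1) / √m := by field_simp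
    _ ≤ (c * √(Fintype.card Z) + 1) / √m := by
        gcongr
        exact le_mul_of_one_le_right hc (Real.one_le_sqrt.2 (by exact_mod_cast hD))
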